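/- Let k, d > 0, h > 0 and ξ_m = ξ + 2πm/d for an integer m ≠ 0 and ξ ∈ ℂ with |Re ξ| ≤ π/d + ε and |Im ξ| ≤ h. Let α be as above and suppose Re α(ξ_m) < 0. Then for x₁ ∈ ℝ and x₂ ∈ ℂ with Re x₂ ≥ δ > 0 and |x₂| ≤ δ⁻¹, the modulus |e^{iξ_m x₁} e^{α(ξ_m)x₂} / (2α(ξ_m))| is bounded by e^{-x₁ Im ξ} · e^{-(2|m|π/d)δ + C/|m|} · e^{|ξ|/δ} / ((4|m|π/d) - C') for constants C, C' independent of m, and in particular the series Σ_{m∈ℤ} e^{iξ_m x₁} e^{α(ξ_m)x₂}/(-2α(ξ_m)) converges absolutely (and uniformly on compact subsets of {Re x₂ ≥ δ, |x₂| ≤ 1/δ}). -/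

import Mathlib

noncomputable def csqrt (z : ℂ) : ℂ := z ^ (1/2 : ℂ)

/-- α(ξ) = -√(i(ξ-k))·√(-i(ξ+k)) with principal square roots. -/
noncomputable def alphaFn (k : ℝ) (ξ : ℂ) : ℂ :=
  -(csqrt (Complex.I * (ξ - (k : ℂ))) * csqrt (-Complex.I * (ξ + (k : ℂ))))

open Complex

lemma csqrt_mul_self {z : ℂ} (hz : z ≠ 0) : csqrt z * csqrt z = z := by
  unfold csqrt
  rw [← Complex.cpow_add _ _ hz]
  norm_num

lemma re_csqrt_nonneg (z : ℂ) : 0 ≤ (csqrt z).re := by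
  unfold csqrt
  rcases eq_or_ne z 0 with h | h
  · simp [h, Complex.zero_cpow (by norm_num : (1/2:ℂ) ≠ 0)]
  · rw [Complex.cpow_def_of_ne_zero h, Complex.exp_re]
    apply mul_nonneg (Real.exp_pos _).le
    apply Real.cos_nonneg_of_mem_Icc
    constructor
    · simp [Complex.mul_im, Complex.log_im]
      nlinarith [Complex.neg_pi_lt_arg z, Real.pi_pos]
    · simp [Complex.mul_im, Complex.log_im]
      nlinarith [Complex.arg_le_pi z, Real.pi_pos]

lemma sqrt_unique {u v : ℂ} (h : u * u = v * v) (hu : 0 < u.re) (hv : 0 < v.re) : u = v := by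
  have h0 : (u - v) * (u + v) = 0 := by linear_combination h
  rcases mul_eq_zero.mp h0 with h1 | h1
  · linear_combination h1
  · exfalso
    have : (u + v).re = 0 := by rw [h1]; simp
    simp [Complex.add_re] at this
    linarith

lemma abs_csqrt_sq (z : ℂ) : (‖csqrt z‖)^2 = ‖z‖ := by
  rcases eq_or_ne z 0 with h | h
  · simp [h, csqrt, Complex.zero_cpow (by norm_num : (1/2:ℂ) ≠ 0)]
  · rw [sq, ← norm_mul, csqrt_mul_self h]

lemma re_csqrt_pos {z : ℂ} (hz : 0 < z.re) : 0 < (csqrt z).re := by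
  have h0 : z ≠ 0 := fun h => by simp [h] at hz
  have hsq := csqrt_mul_self h0
  have h1 : (csqrt z).re * (csqrt z).re - (csqrt z).im * (csqrt z).im = z.re := by
    have := congrArg Complex.re hsq
    simpa [Complex.mul_re] using this
  have h2 := re_csqrt_nonneg z
  nlinarith

lemma branch {a b : ℂ} (ha : 0 < a.re) (hb : 0 < b.re) (hab : 0 < (a*b).re) :
    csqrt (Complex.I * a) * csqrt (-Complex.I * b) = csqrt (a * b) := by
  set u := csqrt (Complex.I * a) with hu
  set v := csqrt (-Complex.I * b) with hv
  have hIa : Complex.I * a ≠ 0 :=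
    mul_ne_zero Complex.I_ne_zero (fun h => by simp [h] at ha)
  have hIb : -Complex.I * b ≠ 0 := by
    apply mul_ne_zero (by simp [Complex.I_ne_zero]) (fun h => by simp [h] at hb)
  have hu2 : u * u = Complex.I * a := csqrt_mul_self hIa
  have hv2 : v * v = -Complex.I * b := csqrt_mul_self hIb
  have hure : 0 ≤ u.re := re_csqrt_nonneg _
  have hvre : 0 ≤ v.re := re_csqrt_nonneg _
  have huim : u.re * u.im + u.im * u.re = a.re := by
    have : (u*u).im = (Complex.I * a).im := by rw [hu2]
    simpa [Complex.mul_im] using this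
  have hvim : v.re * v.im + v.im * v.re = -b.re := by
    have : (v*v).im = (-Complex.I * b).im := by rw [hv2]
    simpa [Complex.mul_im] using this
  have hpu : 0 < u.re * u.im := by nlinarith
  have hpv : v.re * v.im < 0 := by nlinarith
  have hure' : 0 < u.re := lt_of_le_of_ne hure (fun hh => by simp [← hh] at hpu)
  have huim' : 0 < u.im := by nlinarith
  have hvre' : 0 < v.re := lt_of_le_of_ne hvre (fun hh => by simp [← hh] at hpv)
  have hvim' : v.im < 0 := by nlinarith
  have hab0 : a * b ≠ 0 := fun hh => by simp [hh] at hab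
  apply sqrt_unique ?_ ?_ (re_csqrt_pos hab)
  · rw [csqrt_mul_self hab0,
      show u*v*(u*v) = (u*u)*(v*v) by ring, hu2, hv2,
      show Complex.I * a * (-Complex.I * b) = -(Complex.I*Complex.I) * (a*b) by ring,
      Complex.I_mul_I]
    ring
  · simp only [Complex.mul_re]
    nlinarith

lemma alpha_even (k : ℝ) (ξ : ℂ) : alphaFn k (-ξ) = alphaFn k ξ := by
  unfold alphaFn
  rw [show Complex.I * (-ξ - (k:ℂ)) = -Complex.I * (ξ + (k:ℂ)) by ring,
    show -Complex.I * (-ξ + (k:ℂ)) = Complex.I * (ξ - (k:ℂ)) by ring, mul_comm]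

lemma alpha_eq {k : ℝ} (hk : 0 < k) {s : ℂ} (h1 : k < s.re) (h2 : s.im^2 + k^2 < s.re^2) :
    alphaFn k s = -csqrt (s * s - (k:ℂ) * (k:ℂ)) := by
  unfold alphaFn
  have ha : 0 < (s - (k:ℂ)).re := by simp; linarith
  have hb : 0 < (s + (k:ℂ)).re := by simp; nlinarith
  have hab : 0 < ((s - (k:ℂ)) * (s + (k:ℂ))).re := by
    simp [Complex.mul_re]
    nlinarith
  rw [branch ha hb hab]
  congr 1
  congr 1
  ring

set_option maxHeartbeats 1000000 in
lemma main_bound (k d h δ : ℝ) (hk : 0 < k) (hd : 0 < d) (hh : 0 < h) (hδ : 0 < δ)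
    (ξ : ℂ) (him : |ξ.im| ≤ h)
    (x₁ : ℝ) (x₂ : ℂ) (hx₂ : δ ≤ x₂.re) (hx₂' : ‖x₂‖ ≤ 1/δ)
    (m : ℤ) (hm : m ≠ 0)
    (hbig : 4*‖ξ‖ + 4*k + 4*h + 4 < 4 * |(m:ℝ)| * Real.pi / d) :
    ‖Complex.exp (Complex.I * (ξ + ((2 * Real.pi * (m : ℝ) / d : ℝ) : ℂ)) * (x₁ : ℂ))
        * Complex.exp (alphaFn k (ξ + ((2 * Real.pi * (m : ℝ) / d : ℝ) : ℂ)) * x₂)‖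
      / (2 * ‖alphaFn k (ξ + ((2 * Real.pi * (m : ℝ) / d : ℝ) : ℂ))‖)
      ≤ Real.exp (-(x₁ * ξ.im))
          * Real.exp (-(2 * |(m : ℝ)| * Real.pi / d) * δ + (k^2*d/(Real.pi*δ)) / |(m : ℝ)|)
          * Real.exp (‖ξ‖ / δ)
          / (4 * |(m : ℝ)| * Real.pi / d - (4*‖ξ‖ + 4*k + 4*h + 4)) := by
  have hπ := Real.pi_pos
  have habs_re : |ξ.re| ≤ ‖ξ‖ := Complex.abs_re_le_norm ξ
  have habs_im : |ξ.im| ≤ ‖ξ‖ := Complex.abs_im_le_norm ξ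
  have haξ : 0 ≤ ‖ξ‖ := norm_nonneg ξ
  have hm1 : (1:ℝ) ≤ |(m:ℝ)| := by
    have := Int.one_le_abs hm
    calc (1:ℝ) = ((1:ℤ):ℝ) := by norm_num
    _ ≤ ((|m|:ℤ):ℝ) := by exact_mod_cast this
    _ = |(m:ℝ)| := by push_cast; ring
  set ξm := ξ + ((2 * Real.pi * (m : ℝ) / d : ℝ) : ℂ) with hξm_def
  set c := 2 * Real.pi * |(m:ℝ)| / d with hc_def
  have hc2 : 4 * |(m:ℝ)| * Real.pi / d = 2 * c := by rw [hc_def]; ring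
  have hcpos : 0 < c := by rw [hc_def]; positivity
  have hcbig : 2*‖ξ‖ + 2*k + 2*h + 2 < c := by
    rw [hc2] at hbig; linarith
  set σ : ℝ := (m.sign : ℝ) with hσ_def
  have hσ : σ = 1 ∨ σ = -1 := by
    rcases Int.lt_or_lt_of_ne hm with h1 | h1
    · right; rw [hσ_def, Int.sign_eq_neg_one_of_neg h1]; norm_num
    · left; rw [hσ_def, Int.sign_eq_one_of_pos h1]; norm_num
  have hσa : |σ| = 1 := by rcases hσ with h1 | h1 <;> rw [h1] <;> norm_num
  set s : ℂ := (σ:ℂ) * ξ + ((c:ℝ):ℂ) with hs_def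
  have hkey : σ * c = 2 * Real.pi * (m:ℝ) / d := by
    have h1 : σ * |(m:ℝ)| = (m:ℝ) := by
      have h2 := Int.sign_mul_abs m
      calc σ * |(m:ℝ)| = ((m.sign * |m| : ℤ) : ℝ) := by push_cast; ring
      _ = (m:ℝ) := by rw [h2]
    calc σ * c = 2 * Real.pi * (σ * |(m:ℝ)|) / d := by rw [hc_def]; ring
    _ = 2 * Real.pi * (m:ℝ) / d := by rw [h1]
  have hσsq : ((σ:ℝ):ℂ) * ((σ:ℝ):ℂ) = 1 := by
    rcases hσ with h1 | h1 <;> rw [h1] <;> norm_num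
  have hξm : ξm = ((σ:ℝ):ℂ) * s := by
    rw [hξm_def, hs_def, show ((2 * Real.pi * (m : ℝ) / d : ℝ) : ℂ) = ((σ * c : ℝ):ℂ) by
      rw [hkey]]
    push_cast
    linear_combination (-ξ) * hσsq
  have hαeq : alphaFn k ξm = alphaFn k s := by
    rw [hξm]
    rcases hσ with h1 | h1
    · rw [h1]; norm_num
    · rw [h1]; rw [show ((-1:ℝ):ℂ) * s = -s by push_cast; ring]
      exact alpha_even k s
  have hsre : s.re = σ * ξ.re + c := by
    rw [hs_def]; simp [Complex.add_re, Complex.mul_re]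
  have hsim : s.im = σ * ξ.im := by
    rw [hs_def]; simp [Complex.add_im, Complex.mul_im]
  have hsim_h : |s.im| ≤ h := by rw [hsim, abs_mul, hσa, one_mul]; exact him
  have hsrelb : c - ‖ξ‖ ≤ s.re := by
    have h1 := neg_abs_le (σ * ξ.re)
    rw [abs_mul, hσa, one_mul] at h1
    rw [hsre]; linarith
  have hks : k < s.re := by linarith
  have hkh : k + h < s.re := by linarith
  have him2 : s.im^2 ≤ h^2 := by
    nlinarith [abs_nonneg s.im, _root_.sq_abs s.im]
  have h2 : s.im^2 + k^2 < s.re^2 := by nlinarith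
  have hα : alphaFn k s = -csqrt (s * s - (k:ℂ) * (k:ℂ)) := alpha_eq hk hks h2
  set w := csqrt (s * s - (k:ℂ) * (k:ℂ)) with hw_def
  have hzre : 0 < (s * s - (k:ℂ) * (k:ℂ)).re := by
    simp only [Complex.sub_re, Complex.mul_re, Complex.ofReal_re, Complex.ofReal_im]
    nlinarith
  have hz0 : s * s - (k:ℂ) * (k:ℂ) ≠ 0 := fun hh0 => by simp [hh0] at hzre
  have hwre : 0 < w.re := re_csqrt_pos hzre
  have hw2 : w * w = s * s - (k:ℂ) * (k:ℂ) := csqrt_mul_self hz0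
  have habsw2 : (‖w‖)^2 = ‖s * s - (k:ℂ) * (k:ℂ)‖ := abs_csqrt_sq _
  -- lower bound for |w|
  have habss : |s.re| ≤ ‖s‖ := Complex.abs_re_le_norm s
  have hzlow : s.re^2 - k^2 ≤ ‖s * s - (k:ℂ) * (k:ℂ)‖ := by
    have h3 : ‖s * s‖ - ‖(k:ℂ) * (k:ℂ)‖ ≤ ‖s * s - (k:ℂ) * (k:ℂ)‖ := norm_sub_norm_le _ _
    rw [norm_mul, norm_mul,
      Complex.norm_real, Real.norm_eq_abs, abs_of_pos hk] at h3
    nlinarith [habss, abs_nonneg s.re, _root_.sq_abs s.re]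
  have hwlb : s.re - k ≤ ‖w‖ := by
    have hq : (s.re - k)^2 ≤ (‖w‖)^2 := by
      rw [habsw2]; nlinarith [hzlow]
    nlinarith [norm_nonneg w, hq]
  -- bound on r = s - w
  have hswre : 0 < (s + w).re := by
    rw [Complex.add_re]; linarith
  have hrprod : (s - w) * (s + w) = (k:ℂ) * (k:ℂ) := by linear_combination -hw2
  have habsr : ‖s - w‖ * ‖s + w‖ = k^2 := by
    rw [← norm_mul, hrprod, norm_mul, Complex.norm_real, Real.norm_eq_abs, abs_of_pos hk]; ring
  have habssw : s.re ≤ ‖s + w‖ := by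
    have := Complex.re_le_norm (s + w)
    rw [Complex.add_re] at this; linarith
  have hsrepos : 0 < s.re := by linarith
  have habsr' : ‖s - w‖ ≤ k^2 / s.re := by
    rw [le_div_iff₀ hsrepos]
    calc ‖s - w‖ * s.re ≤ ‖s - w‖ * ‖s + w‖ :=
      mul_le_mul_of_nonneg_left habssw (norm_nonneg _)
    _ = k^2 := habsr
  have hchalf : c / 2 ≤ s.re := by linarith
  have habsr2 : ‖s - w‖ ≤ 2 * k^2 / c := by
    calc ‖s - w‖ ≤ k^2 / s.re := habsr'
    _ ≤ k^2 / (c/2) := by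
        apply div_le_div_of_nonneg_left (by positivity) (by linarith) hchalf
    _ = 2 * k^2 / c := by ring
  -- numerator exponent bound
  have hαs : alphaFn k ξm = -s + (s - w) := by rw [hαeq, hα]; ring
  have h_sx : c * δ - ‖ξ‖ / δ ≤ (s * x₂).re := by
    have hsx2 : s * x₂ = ((σ:ℝ):ℂ) * ξ * x₂ + ((c:ℝ):ℂ) * x₂ := by rw [hs_def]; ring
    rw [hsx2, Complex.add_re]
    have hb1 : -(‖ξ‖ / δ) ≤ (((σ:ℝ):ℂ) * ξ * x₂).re := by
      have h4 := neg_abs_le ((((σ:ℝ):ℂ) * ξ * x₂).re)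
      have h5 : |(((σ:ℝ):ℂ) * ξ * x₂).re| ≤ ‖ξ‖ / δ := by
        refine le_trans (Complex.abs_re_le_norm _) ?_
        rw [norm_mul, norm_mul, Complex.norm_real, Real.norm_eq_abs, hσa, one_mul]
        calc ‖ξ‖ * ‖x₂‖ ≤ ‖ξ‖ * (1/δ) :=
          mul_le_mul_of_nonneg_left hx₂' haξ
        _ = ‖ξ‖ / δ := by ring
      linarith
    have hb2 : c * δ ≤ (((c:ℝ):ℂ) * x₂).re := by
      have : (((c:ℝ):ℂ) * x₂).re = c * x₂.re := by
        simp [Complex.mul_re]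
      rw [this]
      exact mul_le_mul_of_nonneg_left hx₂ hcpos.le
    linarith
  have h_rx : ((s - w) * x₂).re ≤ (k^2 * d / (Real.pi * δ)) / |(m:ℝ)| := by
    have h6 : ((s - w) * x₂).re ≤ ‖s - w‖ * ‖x₂‖ := by
      refine le_trans (Complex.re_le_norm _) ?_
      rw [norm_mul]
    have h7 : ‖s - w‖ * ‖x₂‖ ≤ (2 * k^2 / c) * (1/δ) := by
      apply mul_le_mul habsr2 hx₂' (norm_nonneg _) (by positivity)
    have h8 : (2 * k^2 / c) * (1/δ) = (k^2 * d / (Real.pi * δ)) / |(m:ℝ)| := by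
      rw [hc_def]
      field_simp
    linarith
  have hYre : (alphaFn k ξm * x₂).re ≤
      -(c * δ) + ‖ξ‖ / δ + (k^2 * d / (Real.pi * δ)) / |(m:ℝ)| := by
    rw [hαs, show (-s + (s - w)) * x₂ = -(s * x₂) + (s - w) * x₂ by ring,
      Complex.add_re, Complex.neg_re]
    linarith
  -- the oscillatory factor
  have hXre : (Complex.I * ξm * (x₁:ℂ)).re = -(x₁ * ξ.im) := by
    rw [hξm_def]
    simp [Complex.mul_re, Complex.mul_im]
    ring
  -- denominator
  have habsα : ‖alphaFn k ξm‖ = ‖w‖ := by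
    rw [hαeq, hα, norm_neg]
  have hden : 2*c - (4*‖ξ‖ + 4*k + 4*h + 4) ≤ 2 * ‖alphaFn k ξm‖ := by
    rw [habsα]; linarith
  have hDpos : 0 < 2*c - (4*‖ξ‖ + 4*k + 4*h + 4) := by linarith
  -- assemble
  rw [norm_mul, Complex.norm_exp, Complex.norm_exp, hXre, hc2]
  apply div_le_div₀ (by positivity) ?_ hDpos hden
  have hcc : 2 * |(m:ℝ)| * Real.pi / d = c := by rw [hc_def]; ring
  rw [mul_assoc, ← Real.exp_add, ← Real.exp_add, ← Real.exp_add]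
  apply Real.exp_le_exp.mpr
  rw [hcc]
  linarith

set_option maxHeartbeats 1000000 in
/-- Term-wise bound and absolute convergence of the Fourier-series representation
of the quasi-periodic Green's function, for Re x₂ ≥ δ > 0 and |x₂| ≤ 1/δ. -/
theorem stmt16 (k d h ε δ : ℝ) (hk : 0 < k) (hd : 0 < d) (hh : 0 < h)
    (hε : 0 < ε) (hδ : 0 < δ)
    (ξ : ℂ) (hre : |ξ.re| ≤ Real.pi / d + ε) (him : |ξ.im| ≤ h)
    (hneg : ∀ m : ℤ, m ≠ 0 → (alphaFn k (ξ + ((2 * Real.pi * (m : ℝ) / d : ℝ) : ℂ))).re < 0)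
    (x₁ : ℝ) (x₂ : ℂ) (hx₂ : δ ≤ x₂.re) (hx₂' : ‖x₂‖ ≤ 1/δ) :
    (∃ C C' : ℝ, ∀ m : ℤ, m ≠ 0 → C' < 4 * |(m : ℝ)| * Real.pi / d →
      ‖Complex.exp (Complex.I * (ξ + ((2 * Real.pi * (m : ℝ) / d : ℝ) : ℂ)) * (x₁ : ℂ))
          * Complex.exp (alphaFn k (ξ + ((2 * Real.pi * (m : ℝ) / d : ℝ) : ℂ)) * x₂)
          / (2 * alphaFn k (ξ + ((2 * Real.pi * (m : ℝ) / d : ℝ) : ℂ)))‖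
        ≤ Real.exp (-(x₁ * ξ.im))
            * Real.exp (-(2 * |(m : ℝ)| * Real.pi / d) * δ + C / |(m : ℝ)|)
            * Real.exp (‖ξ‖ / δ)
            / (4 * |(m : ℝ)| * Real.pi / d - C')) ∧
    Summable (fun m : ℤ =>
      ‖Complex.exp (Complex.I * (ξ + ((2 * Real.pi * (m : ℝ) / d : ℝ) : ℂ)) * (x₁ : ℂ))
          * Complex.exp (alphaFn k (ξ + ((2 * Real.pi * (m : ℝ) / d : ℝ) : ℂ)) * x₂)
          / (-2 * alphaFn k (ξ + ((2 * Real.pi * (m : ℝ) / d : ℝ) : ℂ)))‖) := by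
  have hπ := Real.pi_pos
  have haξ : 0 ≤ ‖ξ‖ := norm_nonneg ξ
  set C : ℝ := k^2*d/(Real.pi*δ) with hC_def
  set C' : ℝ := 4*‖ξ‖ + 4*k + 4*h + 4 with hC'_def
  have hCpos : 0 ≤ C := by rw [hC_def]; positivity
  have hC'pos : 0 < C' := by rw [hC'_def]; positivity
  constructor
  · refine ⟨C, C', fun m hm hlt => ?_⟩
    have hb := main_bound k d h δ hk hd hh hδ ξ him x₁ x₂ hx₂ hx₂' m hm
      (by rw [← hC'_def]; exact hlt)
    have habs2 : ∀ z : ℂ, ‖2 * z‖ = 2 * ‖z‖ := fun z => by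
      rw [norm_mul, Complex.norm_two]
    rw [norm_div, habs2]
    exact hb
  · -- summability
    set f : ℤ → ℝ := fun m =>
      ‖Complex.exp (Complex.I * (ξ + ((2 * Real.pi * (m : ℝ) / d : ℝ) : ℂ)) * (x₁ : ℂ))
          * Complex.exp (alphaFn k (ξ + ((2 * Real.pi * (m : ℝ) / d : ℝ) : ℂ)) * x₂)
          / (-2 * alphaFn k (ξ + ((2 * Real.pi * (m : ℝ) / d : ℝ) : ℂ)))‖ with hf_def
    have hf : ∀ m : ℤ, f m =
        ‖Complex.exp (Complex.I * (ξ + ((2 * Real.pi * (m : ℝ) / d : ℝ) : ℂ)) * (x₁ : ℂ))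
          * Complex.exp (alphaFn k (ξ + ((2 * Real.pi * (m : ℝ) / d : ℝ) : ℂ)) * x₂)‖
          / (2 * ‖alphaFn k (ξ + ((2 * Real.pi * (m : ℝ) / d : ℝ) : ℂ))‖) := by
      intro m
      have habs2 : ∀ z : ℂ, ‖-2 * z‖ = 2 * ‖z‖ := fun z => by
        rw [show (-2 : ℂ) * z = -(2 * z) by ring, norm_neg, norm_mul, Complex.norm_two]
      simp only [hf_def]
      rw [norm_div, habs2]
    set ρ : ℝ := Real.exp (-(2 * Real.pi * δ / d)) with hρ_def
    have hρ0 : 0 ≤ ρ := Real.exp_pos _ |>.le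
    have hρ1 : ρ < 1 := by
      rw [hρ_def]
      rw [Real.exp_lt_one_iff]
      have : 0 < 2 * Real.pi * δ / d := by positivity
      linarith
    set A : ℝ := Real.exp (-(x₁ * ξ.im)) * Real.exp C * Real.exp (‖ξ‖ / δ) with hA_def
    have hA0 : 0 ≤ A := by rw [hA_def]; positivity
    set N : ℕ := ⌈(C' + 1) * d / (4 * Real.pi)⌉₊ + 1 with hN_def
    have hN1 : 1 ≤ N := by rw [hN_def]; omega
    have key : ∀ m : ℤ, (N:ℝ) ≤ |(m:ℝ)| → f m ≤ A * ρ ^ m.natAbs := by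
      intro m hmN
      have hN1' : (1:ℝ) ≤ (N:ℝ) := by exact_mod_cast hN1
      have hm1 : (1:ℝ) ≤ |(m:ℝ)| := le_trans hN1' hmN
      have hm : m ≠ 0 := by
        intro h0; rw [h0] at hm1; norm_num at hm1
      have hceil : (C' + 1) * d / (4 * Real.pi) ≤ (N:ℝ) := by
        rw [hN_def]; push_cast
        have := Nat.le_ceil ((C' + 1) * d / (4 * Real.pi))
        linarith
      have hlt' : C' + 1 ≤ 4 * |(m:ℝ)| * Real.pi / d := by
        rw [le_div_iff₀ hd]
        have h1 : (C' + 1) * d / (4 * Real.pi) ≤ |(m:ℝ)| := le_trans hceil hmN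
        have h2 : (C' + 1) * d ≤ |(m:ℝ)| * (4 * Real.pi) := by
          rw [div_le_iff₀ (by positivity)] at h1
          linarith
        nlinarith
      have hlt : C' < 4 * |(m:ℝ)| * Real.pi / d := by linarith
      have hb := main_bound k d h δ hk hd hh hδ ξ him x₁ x₂ hx₂ hx₂' m hm
        (by rw [← hC'_def]; exact hlt)
      rw [← hC'_def, ← hC_def] at hb
      rw [hf m]
      refine le_trans hb ?_
      have hnatabs : ((m.natAbs : ℕ) : ℝ) = |(m:ℝ)| := by
        rw [Nat.cast_natAbs]; push_cast; ring
      have hexp1 : Real.exp (-(2 * |(m:ℝ)| * Real.pi / d) * δ + C / |(m:ℝ)|)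
          ≤ Real.exp C * ρ ^ m.natAbs := by
        rw [hρ_def, ← Real.exp_nat_mul, ← Real.exp_add, Real.exp_le_exp, hnatabs]
        have hCm : C / |(m:ℝ)| ≤ C := by
          rw [div_le_iff₀ (by linarith)]
          nlinarith
        have : -(2 * |(m:ℝ)| * Real.pi / d) * δ = |(m:ℝ)| * -(2 * Real.pi * δ / d) := by
          ring
        linarith [this.ge, this.le]
      have hD1 : 1 ≤ 4 * |(m:ℝ)| * Real.pi / d - C' := by linarith
      calc Real.exp (-(x₁ * ξ.im))
            * Real.exp (-(2 * |(m:ℝ)| * Real.pi / d) * δ + C / |(m:ℝ)|)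
            * Real.exp (‖ξ‖ / δ)
            / (4 * |(m:ℝ)| * Real.pi / d - C')
          ≤ Real.exp (-(x₁ * ξ.im))
            * Real.exp (-(2 * |(m:ℝ)| * Real.pi / d) * δ + C / |(m:ℝ)|)
            * Real.exp (‖ξ‖ / δ) / 1 := by
            apply div_le_div_of_nonneg_left (by positivity) (by linarith) hD1
      _ = Real.exp (-(x₁ * ξ.im))
            * Real.exp (-(2 * |(m:ℝ)| * Real.pi / d) * δ + C / |(m:ℝ)|)
            * Real.exp (‖ξ‖ / δ) := by rw [div_one]
      _ ≤ Real.exp (-(x₁ * ξ.im)) * (Real.exp C * ρ ^ m.natAbs)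
            * Real.exp (‖ξ‖ / δ) := by
            apply mul_le_mul_of_nonneg_right ?_ (Real.exp_pos _).le
            exact mul_le_mul_of_nonneg_left hexp1 (Real.exp_pos _).le
      _ = A * ρ ^ m.natAbs := by rw [hA_def]; ring
    have hf0 : ∀ m : ℤ, 0 ≤ f m := fun m => norm_nonneg _
    apply Summable.of_nat_of_neg_add_one
    · rw [← summable_nat_add_iff N]
      apply Summable.of_nonneg_of_le (fun n => hf0 _) (fun n => ?_)
        (((summable_geometric_of_lt_one hρ0 hρ1).mul_left A).comp_injective
          (add_left_injective N))
      have h1 : ((N:ℝ)) ≤ |((((n + N : ℕ)) : ℤ) : ℝ)| := by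
        push_cast
        rw [_root_.abs_of_nonneg (by positivity)]
        linarith
      have h2 := key ((n + N : ℕ) : ℤ) h1
      rw [show (((n + N : ℕ) : ℤ)).natAbs = n + N by omega] at h2
      simpa using h2
    · rw [← summable_nat_add_iff N]
      apply Summable.of_nonneg_of_le (fun n => hf0 _) (fun n => ?_)
        (((summable_geometric_of_lt_one hρ0 hρ1).mul_left A).comp_injective
          (fun a b hab => by simpa using hab : Function.Injective (fun n : ℕ => n + N + 1)))
      have h1 : ((N:ℝ)) ≤ |((-(((n + N : ℕ) : ℤ) + 1) : ℤ) : ℝ)| := by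
        push_cast
        rw [_root_.abs_of_nonpos (by push_cast; linarith)]
        push_cast
        linarith
      have h2 := key (-(((n + N : ℕ) : ℤ) + 1)) h1
      have h3 : (-(((n + N : ℕ) : ℤ) + 1)).natAbs = n + N + 1 := by
        omega
      rw [h3] at h2
      exact h2
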